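/- The planning loss L_PL(r, r') = max_a r'(a) - min_{a ∈ argmax r} r'(a) on reward vectors in ℝ^A (single-state, horizon-1 MDPs with action set A) fails the triangle inequality: there exist rewards r, r', r'' with L_PL(r', r) > L_PL(r', r'') + L_PL(r'', r). -/
import Mathlib


/-- The set of maximizing actions of a reward vector. -/
def argmaxSet {A : Type*} (r : A → ℝ) : Set A := {a | ∀ b, r b ≤ r a}

/-- Planning loss on reward vectors over action set `A`. -/
noncomputable def Lpl {A : Type*} (r r' : A → ℝ) : ℝ :=
  sSup (Set.range r') - sInf (r' '' argmaxSet r)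

open Classical in
lemma spike_sSup {A : Type*} [Fintype A] (p : A) {c : ℝ} (hc : 0 < c) :
    sSup (Set.range (fun x => if x = p then c else 0)) = c := by
  classical
  apply le_antisymm
  · apply csSup_le ⟨_, Set.mem_range_self p⟩
    rintro x ⟨y, rfl⟩
    by_cases h : y = p <;> simp [h, hc.le]
  · apply le_csSup (Set.finite_range _).bddAbove
    exact ⟨p, by simp⟩

open Classical in
lemma spike_argmax {A : Type*} [Fintype A] (p : A) {c : ℝ} (hc : 0 < c) :
    argmaxSet (fun x => if x = p then c else 0) = {p} := by
  classical
  ext x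
  simp only [argmaxSet, Set.mem_setOf_eq, Set.mem_singleton_iff]
  constructor
  · intro h
    by_contra hx
    have := h p
    simp [hx] at this
    linarith
  · rintro rfl y
    by_cases h : y = x <;> simp [h, hc.le]

/-- The planning loss fails the triangle inequality on any action set with `|A| ≥ 2`. -/
theorem stmt_6 (A : Type*) [Fintype A] (hA : 2 ≤ Fintype.card A) :
    ∃ r r' r'' : A → ℝ, Lpl r' r'' + Lpl r'' r < Lpl r' r := by
  classical
  obtain ⟨a, b, hab⟩ := Fintype.exists_pair_of_one_lt_card hA
  refine ⟨fun x => if x = b then 1 else 0, fun x => if x = a then 1 else 0,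
    fun x => if x = b then (1/2 : ℝ) else 0, ?_⟩
  have h1 : (0:ℝ) < 1 := one_pos
  have h2 : (0:ℝ) < 1/2 := by norm_num
  have hr : sSup (Set.range (fun x : A => if x = b then (1:ℝ) else 0)) = 1 :=
    spike_sSup b h1
  have hr'' : sSup (Set.range (fun x : A => if x = b then (1/2:ℝ) else 0)) = 1/2 :=
    spike_sSup b h2
  have ham' : argmaxSet (fun x : A => if x = a then (1:ℝ) else 0) = {a} :=
    spike_argmax a h1
  have ham'' : argmaxSet (fun x : A => if x = b then (1/2:ℝ) else 0) = {b} :=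
    spike_argmax b h2
  simp only [Lpl, hr, hr'', ham', ham'', Set.image_singleton, csInf_singleton]
  simp [hab, Ne.symm hab]
  norm_num
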